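/- Let t₁ be the smallest positive root of (t/√2)cos(t/√2) + sin(t/√2). Define J(t) = J₁(t) - (t₁/4)·J₂(t), where J₁(t) is the 4×2 matrix with entries J₁(t)₁₁=0, J₁(t)₁₂ = -(t·cos(t/√2) + √2·sin(t/√2))/2, J₁(t)₂₁ = (t·cos(t/√2) + √2·sin(t/√2))/2, J₁(t)₂₂=0, J₁(t)₃₁ = (t/(2√2))sin(t/√2), J₁(t)₃₂ = -(t/(2√2))sin(t/√2), J₁(t)₄₁ = (t/(2√2))sin(t/√2), J₁(t)₄₂ = (t/(2√2))sin(t/√2), and J₂(t) is the 4×2 matrix with third row (√2 sin(t/√2), -√2 sin(t/√2)) and fourth row (√2 sin(t/√2), √2 sin(t/√2)) and zero first two rows. Then J(0) = 0 and J(t₁) = 0, while J is not identically zero. -/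
import Mathlib

open Matrix

/-- The Jacobi field `J₁` along the maximally curved geodesic on `St(4,2)`. -/
noncomputable def J₁field (t : ℝ) : Matrix (Fin 4) (Fin 2) ℝ :=
  !![0, -((t * Real.cos (t / Real.sqrt 2) + Real.sqrt 2 * Real.sin (t / Real.sqrt 2)) / 2);
     (t * Real.cos (t / Real.sqrt 2) + Real.sqrt 2 * Real.sin (t / Real.sqrt 2)) / 2, 0;
     (t / (2 * Real.sqrt 2)) * Real.sin (t / Real.sqrt 2),
       -((t / (2 * Real.sqrt 2)) * Real.sin (t / Real.sqrt 2));
     (t / (2 * Real.sqrt 2)) * Real.sin (t / Real.sqrt 2),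
       (t / (2 * Real.sqrt 2)) * Real.sin (t / Real.sqrt 2)]

/-- The Jacobi field `J₂` along the maximally curved geodesic on `St(4,2)`. -/
noncomputable def J₂field (t : ℝ) : Matrix (Fin 4) (Fin 2) ℝ :=
  !![0, 0;
     0, 0;
     Real.sqrt 2 * Real.sin (t / Real.sqrt 2), -(Real.sqrt 2 * Real.sin (t / Real.sqrt 2));
     Real.sqrt 2 * Real.sin (t / Real.sqrt 2), Real.sqrt 2 * Real.sin (t / Real.sqrt 2)]

/-- with `t₁` the smallest positive root of `(t/√2)cos(t/√2)+sin(t/√2)`,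
the Jacobi field `J(t) = J₁(t) - (t₁/4)·J₂(t)` satisfies `J(0) = 0` and `J(t₁) = 0`,
but `J` is not identically zero. -/
theorem jacobi_combination_vanishes_at_t1
    (t₁ : ℝ) (ht₁pos : 0 < t₁)
    (ht₁root : (t₁ / Real.sqrt 2) * Real.cos (t₁ / Real.sqrt 2) +
        Real.sin (t₁ / Real.sqrt 2) = 0)
    (ht₁min : ∀ s, 0 < s →
      (s / Real.sqrt 2) * Real.cos (s / Real.sqrt 2) + Real.sin (s / Real.sqrt 2) = 0 →
      t₁ ≤ s)
    (J : ℝ → Matrix (Fin 4) (Fin 2) ℝ)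
    (hJ : ∀ t, J t = J₁field t - (t₁ / 4) • J₂field t) :
    J 0 = 0 ∧ J t₁ = 0 ∧ ∃ t, J t ≠ 0 := by
  have hs2 : Real.sqrt 2 > 0 := by positivity
  have h22 : Real.sqrt 2 * Real.sqrt 2 = 2 := Real.mul_self_sqrt (by norm_num)
  have key : t₁ * Real.cos (t₁ / Real.sqrt 2) + Real.sqrt 2 * Real.sin (t₁ / Real.sqrt 2) = 0 := by
    have h := ht₁root
    field_simp at h
    nlinarith [h, h22]
  refine ⟨?_, ?_, ?_⟩
  · ext i j
    fin_cases i <;> fin_cases j <;>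
      simp [hJ, J₁field, J₂field]
  · ext i j
    have hrow : t₁ / (2 * Real.sqrt 2) * Real.sin (t₁ / Real.sqrt 2)
        - t₁ / 4 * (Real.sqrt 2 * Real.sin (t₁ / Real.sqrt 2)) = 0 := by
      field_simp
      linear_combination (-2 * t₁ * Real.sin (t₁ / Real.sqrt 2)) * h22
    fin_cases i <;> fin_cases j <;>
      simp [hJ, J₁field, J₂field, Matrix.vecHead, Matrix.vecTail, key] <;> linarith [hrow]
  · refine ⟨t₁ / 2, fun hzero => ?_⟩
    have hne : (t₁ / 2 / Real.sqrt 2) * Real.cos (t₁ / 2 / Real.sqrt 2) +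
        Real.sin (t₁ / 2 / Real.sqrt 2) ≠ 0 := by
      intro h
      have := ht₁min (t₁ / 2) (by linarith) h
      linarith
    have hentry := congrFun (congrFun hzero 0) 1
    simp [hJ, J₁field, J₂field] at hentry
    apply hne
    have : t₁ / 2 * Real.cos (t₁ / 2 / Real.sqrt 2) +
        Real.sqrt 2 * Real.sin (t₁ / 2 / Real.sqrt 2) = 0 := by linarith
    rw [div_div] at this
    field_simp
    linarith [this]
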